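/- Define f(s) = −1/s − s·log s + ((1+s)³/s²)·log(1+s) for s > 0. Then f is monotonically increasing on (0, ∞). -/

import Mathlib

/-!
The derivative of `f` splits as
`f'(x) = 3 / (2(1+x)) + (log (1+x) - log x - 1/(1+x)) + (3x+2)/x³ · ((t - t⁻¹)/2 - log t)`
with `t = 1 + x`. The first term is positive, the second is positive because
`1 - y⁻¹ < log y` for `y = (1+x)/x`, and the third is nonnegative because `log t ≤ sinh (log t)`
for `t ≥ 1`.
-/

open Set Real

lemma Real.log_le_sub_inv_div_two {t : ℝ} (ht : 1 ≤ t) : log t ≤ (t - t⁻¹) / 2 := by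
  rw [← sinh_log (by linarith)]
  exact self_le_sinh_iff.mpr (log_nonneg ht)

lemma Real.inv_one_add_lt_log_one_add_sub_log {x : ℝ} (hx : 0 < x) :
    (1 + x)⁻¹ < log (1 + x) - log x := by
  have hx1 : 0 < 1 + x := by linarith
  have h := log_lt_sub_one_of_pos (div_pos hx hx1) (div_ne_one_of_ne (by linarith))
  rw [log_div hx.ne' hx1.ne'] at h
  have hsub : x / (1 + x) - 1 = -(1 + x)⁻¹ := by field_simp; ring
  linarith

noncomputable def ghostPolarization (s : ℝ) : ℝ :=
  -1 / s - s * log s + ((1 + s) ^ 3 / s ^ 2) * log (1 + s)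

lemma hasDerivAt_ghostPolarization {x : ℝ} (hx : 0 < x) :
    HasDerivAt ghostPolarization
      (3 / (2 * (1 + x)) + (log (1 + x) - log x - (1 + x)⁻¹)
        + (3 * x + 2) / x ^ 3 * ((1 + x - (1 + x)⁻¹) / 2 - log (1 + x))) x := by
  have hx1 : 1 + x ≠ 0 := by positivity
  have hinv : HasDerivAt (fun s : ℝ => -1 / s) (x ^ 2)⁻¹ x := by
    simpa only [neg_div, one_div, neg_neg] using (hasDerivAt_inv hx.ne').fun_neg
  have hxlog : HasDerivAt (fun s : ℝ => s * log s) (1 * log x + x * x⁻¹) x :=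
    (hasDerivAt_id x).mul (hasDerivAt_log hx.ne')
  have hshift : HasDerivAt (fun s : ℝ => 1 + s) 1 x := (hasDerivAt_id x).const_add 1
  have hquot := (hshift.fun_pow 3).fun_div (hasDerivAt_pow 2 x) (by positivity)
  have hlog1 := hshift.log hx1
  refine ((hinv.sub hxlog).add (hquot.mul hlog1)).congr_deriv ?_
  field_simp
  ring

lemma deriv_ghostPolarization_pos {x : ℝ} (hx : 0 < x) :
    0 < deriv ghostPolarization x := by
  rw [(hasDerivAt_ghostPolarization hx).deriv]
  have hrational : 0 < 3 / (2 * (1 + x)) := by positivity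
  have hlogDiff := inv_one_add_lt_log_one_add_sub_log hx
  have hsinh : 0 ≤ (3 * x + 2) / x ^ 3 * ((1 + x - (1 + x)⁻¹) / 2 - log (1 + x)) :=
    mul_nonneg (by positivity) (sub_nonneg.mpr (log_le_sub_inv_div_two (by linarith)))
  linarith

theorem ghost_f_strictMono :
    StrictMonoOn
      (fun s : ℝ => -1 / s - s * Real.log s + ((1 + s) ^ 3 / s ^ 2) * Real.log (1 + s))
      (Set.Ioi 0) := by
  refine strictMonoOn_of_deriv_pos (convex_Ioi 0) (fun x hx => ?_) (fun x hx => ?_)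
  · exact (hasDerivAt_ghostPolarization hx).continuousAt.continuousWithinAt
  · rw [interior_Ioi] at hx
    exact deriv_ghostPolarization_pos hx
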